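/- (Hollmann invariant) Let u, w be smooth ℝ³-valued fields and ρ, S, I smooth scalar fields on ℝ × ℝ³ with ρ > 0 everywhere. Assume the one-form w·dx is Lie dragged by the flow, ∂w/∂t − u×(∇×w) + ∇(u·w) = 0; S and I are advected scalars, ∂S/∂t + u·∇S = 0 and ∂I/∂t + u·∇I = 0; and mass continuity holds, ∂ρ/∂t + ∇·(ρu) = 0. Then the scalar I_h = w·(∇S × ∇I)/ρ is advected with the flow: (∂/∂t + u·∇) I_h = 0. -/

import Mathlib

noncomputable section

/-- Vectors in ℝ³. -/
abbrev Vec3 : Type := Fin 3 → ℝ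

/-- Points of space-time: `(t, x)` with `t : ℝ`, `x : Fin 3 → ℝ`. -/
abbrev Pt : Type := ℝ × Vec3

/-- Euclidean dot product on ℝ³. -/
def dot3 (a b : Vec3) : ℝ := ∑ i, a i * b i

/-- Cross product on ℝ³. -/
def cross3 (a b : Vec3) : Vec3 :=
  ![a 1 * b 2 - a 2 * b 1, a 2 * b 0 - a 0 * b 2, a 0 * b 1 - a 1 * b 0]

/-- Spatial partial derivative ∂f/∂xᵢ of a scalar field. -/
def pd (i : Fin 3) (f : Pt → ℝ) (p : Pt) : ℝ :=
  fderiv ℝ (fun x => f (p.1, x)) p.2 (Pi.single i 1)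

/-- Time derivative ∂f/∂t of a scalar field. -/
def dt (f : Pt → ℝ) (p : Pt) : ℝ := deriv (fun s => f (s, p.2)) p.1

/-- Time derivative of a vector field, componentwise. -/
def dtVec (F : Pt → Vec3) (p : Pt) : Vec3 := fun i => dt (fun q => F q i) p

/-- Spatial gradient ∇f of a scalar field. -/
def grad3 (f : Pt → ℝ) (p : Pt) : Vec3 := fun i => pd i f p

/-- Spatial divergence ∇·F of a vector field. -/
def div3 (F : Pt → Vec3) (p : Pt) : ℝ := ∑ i, pd i (fun q => F q i) p

/-- Spatial curl ∇×F of a vector field. -/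
def curl3 (F : Pt → Vec3) (p : Pt) : Vec3 :=
  ![pd 1 (fun q => F q 2) p - pd 2 (fun q => F q 1) p,
    pd 2 (fun q => F q 0) p - pd 0 (fun q => F q 2) p,
    pd 0 (fun q => F q 1) p - pd 1 (fun q => F q 0) p]

/-- Directional derivative (u·∇)f of a scalar field. -/
def dirD (u : Pt → Vec3) (f : Pt → ℝ) (p : Pt) : ℝ := ∑ i, u p i * pd i f p

/-- Directional derivative (u·∇)F of a vector field. -/
def dirDVec (u F : Pt → Vec3) (p : Pt) : Vec3 :=
  fun j => ∑ i, u p i * pd i (fun q => F q j) p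

/-- (∇u)ᵀ·A, the vector with i-th component ∑ⱼ (∂uʲ/∂xⁱ) Aⱼ. -/
def gradTdot (u A : Pt → Vec3) (p : Pt) : Vec3 :=
  fun i => ∑ j, pd i (fun q => u q j) p * A p j

/-- A field is smooth when it is C^∞ jointly in time and space. -/
def SmoothS (f : Pt → ℝ) : Prop := ContDiff ℝ (⊤ : ℕ∞) f

/-- A vector field is smooth when it is C^∞ jointly in time and space. -/
def SmoothV (F : Pt → Vec3) : Prop := ContDiff ℝ (⊤ : ℕ∞) F

/-! The material derivative `D = ∂ₜ + u·∇` is the derivative along the space-time direction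
`(1, u)`, hence a derivation. The Lie-dragged one-form `w` and the gradients of the advected
scalars `S`, `I` all obey `D a = -(∇u)ᵀ a`; for `∇S` this is the commutator `[∂ᵢ, D] = (∂ᵢu)·∇`
together with `D S = 0`. The triple product `w·(∇S × ∇I)` is a determinant, so the derivation
`a ↦ -(∇u)ᵀ a` acting on all three slots multiplies it by `-tr ∇u = -∇·u`. Mass continuity reads
`D ρ = -(∇·u) ρ`, and the two factors cancel in the quotient. -/

section Calculus

variable {E : Type*} [NormedAddCommGroup E] [NormedSpace ℝ E] {a b : E → Vec3} {x : E}

theorem DifferentiableAt.dot3 (ha : DifferentiableAt ℝ a x) (hb : DifferentiableAt ℝ b x) :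
    DifferentiableAt ℝ (fun y => dot3 (a y) (b y)) x := by
  unfold _root_.dot3
  fun_prop

theorem DifferentiableAt.cross3 (ha : DifferentiableAt ℝ a x) (hb : DifferentiableAt ℝ b x) :
    DifferentiableAt ℝ (fun y => cross3 (a y) (b y)) x :=
  differentiableAt_pi.2 fun i => by fin_cases i <;> simp [_root_.cross3] <;> fun_prop

theorem fderiv_dot3_apply (ha : DifferentiableAt ℝ a x) (hb : DifferentiableAt ℝ b x) (v : E) :
    fderiv ℝ (fun y => dot3 (a y) (b y)) x v
      = dot3 (fderiv ℝ a x v) (b x) + dot3 (a x) (fderiv ℝ b x v) := by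
  simp only [dot3, ← Finset.sum_add_distrib]
  rw [fderiv_fun_sum fun i _ => by fun_prop, sum_apply]
  refine Finset.sum_congr rfl fun i _ => ?_
  rw [fderiv_fun_mul (by fun_prop) (by fun_prop), fderiv_apply ha, fderiv_apply hb]
  simp only [add_apply, smul_apply, ContinuousLinearMap.comp_apply,
    ContinuousLinearMap.proj_apply, smul_eq_mul]
  ring

theorem fderiv_cross3_apply (ha : DifferentiableAt ℝ a x) (hb : DifferentiableAt ℝ b x) (v : E) :
    fderiv ℝ (fun y => cross3 (a y) (b y)) x v
      = cross3 (fderiv ℝ a x v) (b x) + cross3 (a x) (fderiv ℝ b x v) := by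
  have hai := differentiableAt_pi.1 ha
  have hbi := differentiableAt_pi.1 hb
  ext i
  rw [← ContinuousLinearMap.proj_apply (R := ℝ) i (fderiv ℝ _ x v),
    ← ContinuousLinearMap.comp_apply, ← fderiv_apply (ha.cross3 hb)]
  fin_cases i <;>
    simp only [cross3, Fin.isValue, Fin.zero_eta, Fin.mk_one, Fin.reduceFinMk, Matrix.cons_val,
      Matrix.cons_val_zero, Matrix.cons_val_one, hai, hbi, DifferentiableAt.fun_mul,
      fderiv_fun_sub, fderiv_fun_mul, fderiv_apply ha, fderiv_apply hb, sub_apply, add_apply,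
      smul_apply, ContinuousLinearMap.comp_apply, ContinuousLinearMap.proj_apply, smul_eq_mul,
      Pi.add_apply] <;>
    ring

end Calculus

open Matrix in
theorem trace_mul_dot3_cross3 (M : Matrix (Fin 3) (Fin 3) ℝ) (a b c : Vec3) :
    M.trace * dot3 a (cross3 b c)
      = dot3 (M *ᵥ a) (cross3 b c) + dot3 a (cross3 (M *ᵥ b) c + cross3 b (M *ᵥ c)) := by
  simp only [trace, diag_apply, Fin.sum_univ_three, Fin.isValue, dot3, cross3, cons_val_zero,
    cons_val_one, cons_val, mulVec, dotProduct, Pi.add_apply]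
  ring

section SpaceTime

variable {p : Pt}

theorem pd_eq_fderiv {f : Pt → ℝ} (hf : DifferentiableAt ℝ f p) (i : Fin 3) :
    pd i f p = fderiv ℝ f p (0, Pi.single i 1) := by
  rw [pd, ← Function.comp_def f,
    (hf.hasFDerivAt.comp p.2 (hasFDerivAt_prodMk_right p.1 p.2)).fderiv]
  rfl

theorem dt_eq_fderiv {f : Pt → ℝ} (hf : DifferentiableAt ℝ f p) :
    dt f p = fderiv ℝ f p (1, 0) := by
  have hline : HasDerivAt (fun s : ℝ => (s, p.2)) ((1 : ℝ), (0 : Vec3)) p.1 :=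
    (hasDerivAt_id p.1).prodMk (hasDerivAt_const p.1 p.2)
  rw [dt, ← Function.comp_def f, (hf.hasFDerivAt.comp_hasDerivAt p.1 hline).deriv]

theorem sum_mul_pd_eq_fderiv {f : Pt → ℝ} (hf : DifferentiableAt ℝ f p) (x : Vec3) :
    ∑ i, x i * pd i f p = fderiv ℝ f p (0, x) := by
  have hx : ((0 : ℝ), x) = ∑ i, x i • ((0 : ℝ), (Pi.single i 1 : Vec3)) := by
    ext j <;> simp [Prod.fst_sum, Prod.snd_sum, Finset.sum_apply, Pi.single_apply]
  simp only [hx, map_sum, map_smul, smul_eq_mul, pd_eq_fderiv hf]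

theorem pd_apply_eq_fderiv {F : Pt → Vec3} (hF : DifferentiableAt ℝ F p) (i j : Fin 3) :
    pd i (fun q => F q j) p = fderiv ℝ F p (0, Pi.single i 1) j := by
  rw [pd_eq_fderiv (differentiableAt_pi.1 hF j), fderiv_apply hF]
  rfl

theorem pd_mul {f g : Pt → ℝ} (hf : DifferentiableAt ℝ f p) (hg : DifferentiableAt ℝ g p)
    (i : Fin 3) : pd i (fun q => f q * g q) p = f p * pd i g p + pd i f p * g p := by
  rw [pd_eq_fderiv (by fun_prop), fderiv_fun_mul hf hg, pd_eq_fderiv hf, pd_eq_fderiv hg]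
  simp only [add_apply, smul_apply, smul_eq_mul]
  ring

theorem ContDiff.grad3 {f : Pt → ℝ} {m n : WithTop ℕ∞} (hf : ContDiff ℝ n f)
    (hmn : m + 1 ≤ n) : ContDiff ℝ m (grad3 f) := by
  have hdiff : Differentiable ℝ f :=
    (hf.of_le (le_trans le_add_self hmn)).differentiable one_ne_zero
  have hgrad : _root_.grad3 f = fun q i => fderiv ℝ f q (0, Pi.single i 1) :=
    funext fun q => funext fun i => pd_eq_fderiv (hdiff q) i
  rw [hgrad]
  exact contDiff_pi.2 fun i => (hf.fderiv_right hmn).clm_apply contDiff_const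

def matDeriv {F : Type*} [NormedAddCommGroup F] [NormedSpace ℝ F]
    (u : Pt → Vec3) (f : Pt → F) (p : Pt) : F :=
  fderiv ℝ f p (1, u p)

theorem dt_add_dirD_eq_matDeriv {f : Pt → ℝ} (hf : DifferentiableAt ℝ f p) (u : Pt → Vec3) :
    dt f p + dirD u f p = matDeriv u f p := by
  rw [dt_eq_fderiv hf, dirD, sum_mul_pd_eq_fderiv hf, matDeriv, ← map_add, Prod.mk_add_mk,
    add_zero, zero_add]

theorem matDeriv_apply {F : Pt → Vec3} (hF : DifferentiableAt ℝ F p) (u : Pt → Vec3)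
    (j : Fin 3) : matDeriv u F p j = matDeriv u (fun q => F q j) p := by
  rw [matDeriv, matDeriv, fderiv_apply hF]
  rfl

theorem dtVec_add_dirDVec_eq_matDeriv {F : Pt → Vec3} (hF : DifferentiableAt ℝ F p)
    (u : Pt → Vec3) : dtVec F p + dirDVec u F p = matDeriv u F p := by
  funext j
  rw [matDeriv_apply hF, ← dt_add_dirD_eq_matDeriv (differentiableAt_pi.1 hF j)]
  rfl

theorem matDeriv_div {u : Pt → Vec3} {f g : Pt → ℝ} (hf : DifferentiableAt ℝ f p)
    (hg : DifferentiableAt ℝ g p) (hgp : g p ≠ 0) :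
    matDeriv u (fun q => f q / g q) p
      = (matDeriv u f p * g p - f p * matDeriv u g p) / g p ^ 2 := by
  have hinv : HasFDerivAt (fun q => (g q)⁻¹) _ p :=
    (hasFDerivAt_inv hgp).comp p hg.hasFDerivAt
  simp only [div_eq_mul_inv, matDeriv]
  rw [(hf.hasFDerivAt.fun_mul hinv).fderiv]
  simp only [add_apply, smul_apply, ContinuousLinearMap.comp_apply,
    ContinuousLinearMap.toSpanSingleton_apply, smul_eq_mul, mul_neg]
  field_simp
  ring

theorem pd_matDeriv {u : Pt → Vec3} {S : Pt → ℝ} (hu : DifferentiableAt ℝ u p)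
    (hS : ContDiff ℝ 2 S) (i : Fin 3) :
    pd i (matDeriv u S) p = matDeriv u (pd i S) p + gradTdot u (grad3 S) p i := by
  set e : Pt := (0, Pi.single i 1)
  have hS1 : Differentiable ℝ S := hS.differentiable two_ne_zero
  have hDS : DifferentiableAt ℝ (fderiv ℝ S) p :=
    (hS.fderiv_right (m := 1) le_rfl).differentiable one_ne_zero p
  have hline : HasFDerivAt (fun q => ((1 : ℝ), u q)) ((0 : Pt →L[ℝ] ℝ).prod (fderiv ℝ u p)) p :=
    (hasFDerivAt_const 1 p).prodMk hu.hasFDerivAt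
  have hsymm : fderiv ℝ (fderiv ℝ S) p e (1, u p) = fderiv ℝ (fderiv ℝ S) p (1, u p) e :=
    (hS.contDiffAt.isSymmSndFDerivAt (by simp)) e (1, u p)
  have hgrad : gradTdot u (grad3 S) p i = fderiv ℝ S p (0, fderiv ℝ u p e) := by
    rw [← sum_mul_pd_eq_fderiv (hS1 p)]
    simp only [gradTdot, grad3, pd_apply_eq_fderiv hu]
    rfl
  have hmat : matDeriv u S = fun q => fderiv ℝ S q (1, u q) := rfl
  have hpd : pd i S = fun q => fderiv ℝ S q e := funext fun q => pd_eq_fderiv (hS1 q) i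
  rw [hmat, pd_eq_fderiv (hDS.hasFDerivAt.clm_apply hline).differentiableAt, hpd, matDeriv,
    (hDS.hasFDerivAt.clm_apply hline).fderiv, fderiv_clm_apply hDS (differentiableAt_const e)]
  simp only [add_apply, ContinuousLinearMap.comp_apply, ContinuousLinearMap.flip_apply,
    ContinuousLinearMap.prod_apply, zero_apply, fderiv_fun_const, Pi.zero_apply, map_zero,
    zero_add, hgrad]
  linear_combination hsymm

theorem matDeriv_grad3_eq_neg_gradTdot_of_advected {u : Pt → Vec3} {S : Pt → ℝ}
    (hu : DifferentiableAt ℝ u p) (hS : ContDiff ℝ 2 S) (hadv : ∀ q, dt S q + dirD u S q = 0) :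
    matDeriv u (grad3 S) p = -gradTdot u (grad3 S) p := by
  have hzero : matDeriv u S = fun _ => 0 := funext fun q => by
    rw [← dt_add_dirD_eq_matDeriv (hS.differentiable two_ne_zero q), hadv q]
  funext i
  have hcomm := pd_matDeriv hu hS i
  rw [hzero, show pd i (fun _ => (0 : ℝ)) p = 0 by simp [pd]] at hcomm
  rw [matDeriv_apply ((hS.grad3 (m := 1) le_rfl).differentiable one_ne_zero p), Pi.neg_apply]
  exact eq_neg_of_add_eq_zero_left hcomm.symm

theorem grad3_dot3_sub_cross3_curl3 {u w : Pt → Vec3} (hu : DifferentiableAt ℝ u p)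
    (hw : DifferentiableAt ℝ w p) :
    grad3 (fun q => dot3 (u q) (w q)) p - cross3 (u p) (curl3 w p)
      = dirDVec u w p + gradTdot u w p := by
  funext i
  simp only [Pi.sub_apply, Pi.add_apply, grad3, dirDVec, gradTdot, curl3,
    pd_eq_fderiv (hu.dot3 hw), fderiv_dot3_apply hu hw, pd_apply_eq_fderiv hu,
    pd_apply_eq_fderiv hw]
  fin_cases i <;>
    simp only [dot3, Fin.isValue, Fin.zero_eta, Fin.mk_one, Fin.reduceFinMk, Fin.sum_univ_three,
      cross3, Matrix.cons_val, Matrix.cons_val_zero, Matrix.cons_val_one] <;>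
    ring

theorem matDeriv_eq_neg_gradTdot_of_lieDragged {u w : Pt → Vec3} (hu : DifferentiableAt ℝ u p)
    (hw : DifferentiableAt ℝ w p)
    (hlie : dtVec w p - cross3 (u p) (curl3 w p) + grad3 (fun q => dot3 (u q) (w q)) p = 0) :
    matDeriv u w p = -gradTdot u w p := by
  rw [← dtVec_add_dirDVec_eq_matDeriv hw, eq_neg_iff_add_eq_zero, ← hlie, add_assoc,
    ← grad3_dot3_sub_cross3_curl3 hu hw]
  abel

theorem div3_smul {ρ : Pt → ℝ} {u : Pt → Vec3} (hρ : DifferentiableAt ℝ ρ p)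
    (hu : DifferentiableAt ℝ u p) :
    div3 (fun q => ρ q • u q) p = ρ p * div3 u p + dirD u ρ p := by
  simp only [div3, dirD, Pi.smul_apply, smul_eq_mul, pd_mul hρ (differentiableAt_pi.1 hu _),
    Finset.mul_sum, ← Finset.sum_add_distrib]
  exact Finset.sum_congr rfl fun i _ => by ring

theorem matDeriv_eq_neg_div3_mul_of_continuity {ρ : Pt → ℝ} {u : Pt → Vec3}
    (hρ : DifferentiableAt ℝ ρ p) (hu : DifferentiableAt ℝ u p)
    (hcont : dt ρ p + div3 (fun q => ρ q • u q) p = 0) :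
    matDeriv u ρ p = -div3 u p * ρ p := by
  rw [div3_smul hρ hu] at hcont
  rw [← dt_add_dirD_eq_matDeriv hρ]
  linear_combination hcont

def gradMatrix (u : Pt → Vec3) (p : Pt) : Matrix (Fin 3) (Fin 3) ℝ :=
  Matrix.of fun i j => pd i (fun q => u q j) p

open Matrix in
theorem gradTdot_eq_mulVec (u a : Pt → Vec3) (p : Pt) :
    gradTdot u a p = gradMatrix u p *ᵥ a p := rfl

theorem trace_gradMatrix (u : Pt → Vec3) (p : Pt) : (gradMatrix u p).trace = div3 u p := rfl

theorem matDeriv_dot3_cross3_eq_neg_div3_mul {u a b c : Pt → Vec3}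
    (ha : DifferentiableAt ℝ a p) (hb : DifferentiableAt ℝ b p) (hc : DifferentiableAt ℝ c p)
    (ha' : matDeriv u a p = -gradTdot u a p) (hb' : matDeriv u b p = -gradTdot u b p)
    (hc' : matDeriv u c p = -gradTdot u c p) :
    matDeriv u (fun q => dot3 (a q) (cross3 (b q) (c q))) p
      = -div3 u p * dot3 (a p) (cross3 (b p) (c p)) := by
  rw [matDeriv, fderiv_dot3_apply ha (hb.cross3 hc), fderiv_cross3_apply hb hc]
  change dot3 (matDeriv u a p) _
    + dot3 _ (cross3 (matDeriv u b p) _ + cross3 _ (matDeriv u c p)) = _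
  simp only [ha', hb', hc', gradTdot_eq_mulVec, ← Matrix.neg_mulVec, ← trace_gradMatrix,
    ← Matrix.trace_neg, trace_mul_dot3_cross3]

end SpaceTime

/-- Hollmann invariant: I_h = w·(∇S × ∇I)/ρ is advected with
    the flow. -/
theorem hollmann_invariant
    (u w : Pt → Vec3) (ρ S I : Pt → ℝ)
    (hu : SmoothV u) (hw : SmoothV w) (hρ : SmoothS ρ)
    (hS : SmoothS S) (hI : SmoothS I)
    (hρpos : ∀ p : Pt, 0 < ρ p)
    (hlie : ∀ p : Pt,
      dtVec w p - cross3 (u p) (curl3 w p)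
        + grad3 (fun q => dot3 (u q) (w q)) p = 0)
    (hSadv : ∀ p : Pt, dt S p + dirD u S p = 0)
    (hIadv : ∀ p : Pt, dt I p + dirD u I p = 0)
    (hcont : ∀ p : Pt, dt ρ p + div3 (fun q => ρ q • u q) p = 0) :
    ∀ p : Pt,
      dt (fun q => dot3 (w q) (cross3 (grad3 S q) (grad3 I q)) / ρ q) p
        + dirD u
            (fun q => dot3 (w q) (cross3 (grad3 S q) (grad3 I q)) / ρ q) p
        = 0 := by
  intro p
  have hS2 : ContDiff ℝ 2 S := hS.of_le (WithTop.coe_le_coe.mpr le_top)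
  have hI2 : ContDiff ℝ 2 I := hI.of_le (WithTop.coe_le_coe.mpr le_top)
  have hu' : DifferentiableAt ℝ u p := hu.differentiable (by simp) p
  have hw' : DifferentiableAt ℝ w p := hw.differentiable (by simp) p
  have hρ' : DifferentiableAt ℝ ρ p := hρ.differentiable (by simp) p
  have hgS := (hS2.grad3 (m := 1) le_rfl).differentiable one_ne_zero p
  have hgI := (hI2.grad3 (m := 1) le_rfl).differentiable one_ne_zero p
  have hT := hw'.dot3 (hgS.cross3 hgI)
  have hquot : DifferentiableAt ℝ
      (fun q => dot3 (w q) (cross3 (grad3 S q) (grad3 I q)) / ρ q) p := by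
    simpa only [div_eq_mul_inv] using hT.fun_mul (hρ'.fun_inv (hρpos p).ne')
  rw [dt_add_dirD_eq_matDeriv hquot, matDeriv_div hT hρ' (hρpos p).ne',
    matDeriv_dot3_cross3_eq_neg_div3_mul hw' hgS hgI
      (matDeriv_eq_neg_gradTdot_of_lieDragged hu' hw' (hlie p))
      (matDeriv_grad3_eq_neg_gradTdot_of_advected hu' hS2 hSadv)
      (matDeriv_grad3_eq_neg_gradTdot_of_advected hu' hI2 hIadv),
    matDeriv_eq_neg_div3_mul_of_continuity hρ' hu' (hcont p)]
  ring
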